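/- arXiv:0711.0645 — 2 statements merged into one kernel-verified Lean document; each statement's English description precedes it below -/
import Mathlib

section
/- Let L : ℝ × ℝ^n × ℝ^n → ℝ be C², 0 < α ≤ 1, a < t, and q : [a,t] → ℝ^n be C². If q is a critical point of the functional I[q] = (1/Γ(α)) ∫_a^t L(θ, q(θ), q'(θ)) (t−θ)^{α−1} dθ (i.e., the first variation vanishes for all C² variations h with h(a) = h(t) = 0), then q satisfies the fractional Euler–Lagrange equation ∂₂L(θ,q(θ),q'(θ)) − d/dθ [∂₃L(θ,q(θ),q'(θ))] = ((1−α)/(t−θ)) ∂₃L(θ,q(θ),q'(θ)) for all θ ∈ (a,t). -/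
/-!
Differentiating under the integral sign, the first variation of `I` in a direction `h` is
`(1/Γ(α)) ∫ (⟪∂₂L, h⟫ + ⟪∂₃L, h'⟫) ρ` with the weight `ρ θ = (t - θ)^(α-1)`, which is integrable
because `α > 0`. Testing with `h = g • w`, where `g` is smooth with compact support in `(a, t)`,
and integrating by parts (legitimate since `g` vanishes near the singularity of `ρ` at `t`), the
du Bois-Reymond lemma gives `ρ ∂₂L = (ρ ∂₃L)'` on `(a, t)`. Dividing by `ρ > 0` and using
`ρ'/ρ = (1 - α)/(t - θ)` yields the equation.
-/
open Real Set MeasureTheory Topology Function Metric InnerProductSpace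
open scoped ContDiff RealInnerProductSpace

section TestFunctions

variable {F : Type*} [NormedAddCommGroup F] [NormedSpace ℝ F] {U : Set ℝ} {g : ℝ → ℝ}

theorem ContinuousOn.integrable_smul_of_tsupport_subset {X : ℝ → F} (hX : ContinuousOn X U)
    (hU : IsOpen U) (hg : Continuous g) (hgc : HasCompactSupport g) (hgU : tsupport g ⊆ U) :
    Integrable fun x => g x • X x :=
  ((hg.continuousOn.smul hX).continuous_of_tsupport_subset hU
    ((tsupport_smul_subset_left _ _).trans hgU)).integrable_of_hasCompactSupport hgc.smul_right

theorem hasDerivAt_smul_of_tsupport_subset {B B' : ℝ → F}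
    (hg : Differentiable ℝ g) (hgU : tsupport g ⊆ U) (hB : ∀ x ∈ U, HasDerivAt B (B' x) x)
    (x : ℝ) : HasDerivAt (fun y => g y • B y) (g x • B' x + deriv g x • B x) x := by
  by_cases hx : x ∈ tsupport g
  · exact (hg x).hasDerivAt.smul (hB x (hgU hx))
  · have hg0 : g =ᶠ[𝓝 x] 0 := notMem_tsupport_iff_eventuallyEq.mp hx
    have hdg : deriv g x = 0 := notMem_support.mp fun h => hx (support_deriv_subset h)
    rw [image_eq_zero_of_notMem_tsupport hx, hdg, zero_smul, zero_smul, add_zero]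
    exact (hasDerivAt_const x 0).congr_of_eventuallyEq (hg0.mono fun y hy => by simp [hy])

theorem integral_smul_deriv_add_deriv_smul_eq_zero [CompleteSpace F] {B B' : ℝ → F}
    (hU : IsOpen U) (hg : ContDiff ℝ 1 g) (hgc : HasCompactSupport g) (hgU : tsupport g ⊆ U)
    (hB : ∀ x ∈ U, HasDerivAt B (B' x) x) (hB' : ContinuousOn B' U) :
    ∫ x, g x • B' x + deriv g x • B x = 0 := by
  have hBc : ContinuousOn B U := fun x hx => (hB x hx).continuousAt.continuousWithinAt
  refine integral_eq_zero_of_hasDerivAt_of_integrable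
    (hasDerivAt_smul_of_tsupport_subset (hg.differentiable one_ne_zero) hgU hB) ?_
    (hBc.integrable_smul_of_tsupport_subset hU hg.continuous hgc hgU)
  exact (hB'.integrable_smul_of_tsupport_subset hU hg.continuous hgc hgU).add
    (hBc.integrable_smul_of_tsupport_subset hU (hg.continuous_deriv le_rfl) hgc.deriv
      (tsupport_deriv_subset.trans hgU))

/-- The du Bois-Reymond lemma. -/
theorem IsOpen.eqOn_of_integral_smul_add_deriv_smul_eq_zero [CompleteSpace F] {A B B' : ℝ → F}
    (hU : IsOpen U) (hA : ContinuousOn A U) (hB : ∀ x ∈ U, HasDerivAt B (B' x) x)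
    (hB' : ContinuousOn B' U)
    (h : ∀ g : ℝ → ℝ, ContDiff ℝ ∞ g → HasCompactSupport g → tsupport g ⊆ U →
      ∫ x, g x • A x + deriv g x • B x = 0) :
    EqOn A B' U := by
  have hBc : ContinuousOn B U := fun x hx => (hB x hx).continuousAt.continuousWithinAt
  have hae : ∀ᵐ x, x ∈ U → A x - B' x = 0 :=
    hU.ae_eq_zero_of_integral_contDiff_smul_eq_zero
      ((hA.sub hB').locallyIntegrableOn hU.measurableSet) fun g hg hgc hgU => by
        have hg1 : ContDiff ℝ 1 g := hg.of_le (by simp)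
        have hint : ∀ {X : ℝ → F}, ContinuousOn X U →
            Integrable fun x => g x • X x + deriv g x • B x := fun hX =>
          (hX.integrable_smul_of_tsupport_subset hU hg.continuous hgc hgU).add
            (hBc.integrable_smul_of_tsupport_subset hU (hg1.continuous_deriv le_rfl) hgc.deriv
              (tsupport_deriv_subset.trans hgU))
        calc ∫ x, g x • (A x - B' x)
            = (∫ x, g x • A x + deriv g x • B x) - ∫ x, g x • B' x + deriv g x • B x := by
              rw [← integral_sub (hint hA) (hint hB')]
              congr 1 with x
              rw [smul_sub]; abel
          _ = 0 := by
              rw [h g hg hgc hgU, integral_smul_deriv_add_deriv_smul_eq_zero hU hg1 hgc hgU hB hB',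
                sub_zero]
  refine Measure.eqOn_open_of_ae_eq (μ := volume) ?_ hU hA hB'
  exact (ae_restrict_iff' hU.measurableSet).2 (hae.mono fun x hx hxU => sub_eq_zero.1 (hx hxU))

end TestFunctions

theorem hasDerivAt_rpow_sub {s t : ℝ} (hs : s < t) (r : ℝ) :
    HasDerivAt (fun s => (t - s) ^ r) (-r / (t - s) * (t - s) ^ r) s := by
  have hts : 0 < t - s := sub_pos.2 hs
  refine (((hasDerivAt_id s).const_sub t).rpow_const (p := r) (Or.inl hts.ne')).congr_deriv ?_
  simp only [id_eq]
  rw [rpow_sub_one hts.ne']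
  ring

theorem intervalIntegrable_rpow_sub {r : ℝ} (hr : -1 < r) (a b t : ℝ) :
    IntervalIntegrable (fun θ => (t - θ) ^ r) volume a b := by
  simpa using
    (intervalIntegral.intervalIntegrable_rpow' hr (a := t - a) (b := t - b)).comp_sub_left t

theorem hasDerivAt_integral_comp_add_smul {P : Type*} [NormedAddCommGroup P] [NormedSpace ℝ P]
    {L : P → ℝ} (hL : ContDiff ℝ 1 L) {c v : ℝ → P} (hc : Continuous c) (hv : Continuous v)
    {ρ : ℝ → ℝ} {a b : ℝ} (hρ : IntervalIntegrable ρ volume a b) :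
    HasDerivAt (fun ε : ℝ => ∫ θ in a..b, L (c θ + ε • v θ) * ρ θ)
      (∫ θ in a..b, fderiv ℝ L (c θ) (v θ) * ρ θ) 0 := by
  have hγ : Continuous fun p : ℝ × ℝ => c p.1 + p.2 • v p.1 :=
    (hc.comp continuous_fst).add (continuous_snd.smul (hv.comp continuous_fst))
  have hdL : Continuous fun p : ℝ × ℝ => fderiv ℝ L (c p.1 + p.2 • v p.1) (v p.1) :=
    ((hL.continuous_fderiv one_ne_zero).comp hγ).clm_apply (hv.comp continuous_fst)
  obtain ⟨C, hC⟩ :=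
    (isCompact_uIcc.prod (isCompact_closedBall (0 : ℝ) 1)).exists_bound_of_continuousOn
      hdL.continuousOn
  have hρm : AEStronglyMeasurable ρ (volume.restrict (uIoc a b)) := hρ.def'.aestronglyMeasurable
  have hslice : ∀ ε : ℝ, Continuous fun θ => c θ + ε • v θ := fun ε =>
    hγ.comp (continuous_id.prodMk continuous_const)
  have hdom := intervalIntegral.hasDerivAt_integral_of_dominated_loc_of_deriv_le
    (F := fun ε θ => L (c θ + ε • v θ) * ρ θ)
    (F' := fun ε θ => fderiv ℝ L (c θ + ε • v θ) (v θ) * ρ θ)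
    (bound := fun θ => C * ‖ρ θ‖) (x₀ := 0) (ball_mem_nhds 0 one_pos)
    (Filter.Eventually.of_forall fun ε =>
      (hL.continuous.comp (hslice ε)).aestronglyMeasurable.mul hρm)
    (hρ.continuousOn_mul (hL.continuous.comp (hslice 0)).continuousOn)
    ((hdL.comp (continuous_id.prodMk continuous_const)).aestronglyMeasurable.mul hρm)
    ?_ (hρ.norm.const_mul C) ?_
  · simpa using hdom.2
  · refine Filter.Eventually.of_forall fun θ hθ ε hε => ?_
    rw [norm_mul]
    exact mul_le_mul_of_nonneg_right
      (hC (θ, ε) ⟨uIoc_subset_uIcc hθ, ball_subset_closedBall hε⟩) (norm_nonneg _)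
  · refine Filter.Eventually.of_forall fun θ _ ε _ => ?_
    have hline : HasDerivAt (fun ε : ℝ => c θ + ε • v θ) (v θ) ε := by
      simpa using ((hasDerivAt_id ε).smul_const (v θ)).const_add (c θ)
    exact (((hL.differentiable one_ne_zero) _).hasFDerivAt.comp_hasDerivAt ε hline).mul_const _

variable {E : Type*} [NormedAddCommGroup E] [InnerProductSpace ℝ E] [CompleteSpace E]
  {L : ℝ × E × E → ℝ}

noncomputable def gradient₂ (L : ℝ × E × E → ℝ) (p : ℝ × E × E) : E :=
  gradient (fun x => L (p.1, x, p.2.2)) p.2.1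

noncomputable def gradient₃ (L : ℝ × E × E → ℝ) (p : ℝ × E × E) : E :=
  gradient (fun v => L (p.1, p.2.1, v)) p.2.2

theorem gradient₂_eq {p : ℝ × E × E} (hL : DifferentiableAt ℝ L p) :
    gradient₂ L p = (toDual ℝ E).symm
      ((fderiv ℝ L p).comp ((0 : E →L[ℝ] ℝ).prod ((ContinuousLinearMap.id ℝ E).prod 0))) := by
  have hι : HasFDerivAt (fun x : E => (p.1, x, p.2.2))
      ((0 : E →L[ℝ] ℝ).prod ((ContinuousLinearMap.id ℝ E).prod 0)) p.2.1 :=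
    (hasFDerivAt_const _ _).prodMk ((hasFDerivAt_id _).prodMk (hasFDerivAt_const _ _))
  exact (hL.hasFDerivAt.comp p.2.1 hι).hasGradientAt.gradient

theorem gradient₃_eq {p : ℝ × E × E} (hL : DifferentiableAt ℝ L p) :
    gradient₃ L p = (toDual ℝ E).symm
      ((fderiv ℝ L p).comp ((0 : E →L[ℝ] ℝ).prod ((0 : E →L[ℝ] E).prod (.id ℝ E)))) := by
  have hι : HasFDerivAt (fun v : E => (p.1, p.2.1, v))
      ((0 : E →L[ℝ] ℝ).prod ((0 : E →L[ℝ] E).prod (.id ℝ E))) p.2.2 :=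
    (hasFDerivAt_const _ _).prodMk ((hasFDerivAt_const _ _).prodMk (hasFDerivAt_id _))
  exact (hL.hasFDerivAt.comp p.2.2 hι).hasGradientAt.gradient

theorem inner_gradient₂_add_inner_gradient₃ {p : ℝ × E × E} (hL : DifferentiableAt ℝ L p)
    (y z : E) : ⟪gradient₂ L p, y⟫ + ⟪gradient₃ L p, z⟫ = fderiv ℝ L p (0, y, z) := by
  rw [gradient₂_eq hL, gradient₃_eq hL, toDual_symm_apply, toDual_symm_apply]
  simp [← map_add]

section Regularity

variable {X : Type*} [NormedAddCommGroup X] [NormedSpace ℝ X] {c : X → ℝ × E × E}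
  {k : WithTop ℕ∞}

theorem ContDiff.gradient₂_comp (hL : ContDiff ℝ (k + 1) L) (hc : ContDiff ℝ k c) :
    ContDiff ℝ k fun x => gradient₂ L (c x) := by
  simp_rw [gradient₂_eq ((hL.differentiable (by simp)) _)]
  exact (toDual ℝ E).symm.contDiff.comp (((hL.fderiv_right le_rfl).comp hc).clm_comp contDiff_const)

theorem ContDiff.gradient₃_comp (hL : ContDiff ℝ (k + 1) L) (hc : ContDiff ℝ k c) :
    ContDiff ℝ k fun x => gradient₃ L (c x) := by
  simp_rw [gradient₃_eq ((hL.differentiable (by simp)) _)]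
  exact (toDual ℝ E).symm.contDiff.comp (((hL.fderiv_right le_rfl).comp hc).clm_comp contDiff_const)

end Regularity

noncomputable def firstVariation (L : ℝ × E × E → ℝ) (ρ : ℝ → ℝ) (a b : ℝ) (q h : ℝ → E) : ℝ :=
  deriv (fun ε : ℝ => ∫ θ in a..b, L (θ, q θ + ε • h θ, deriv q θ + ε • deriv h θ) * ρ θ) 0

theorem firstVariation_eq {ρ : ℝ → ℝ} {a b : ℝ} {q h : ℝ → E} (hL : ContDiff ℝ 1 L)
    (hq : ContDiff ℝ 1 q) (hh : ContDiff ℝ 1 h) (hρ : IntervalIntegrable ρ volume a b) :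
    firstVariation L ρ a b q h = ∫ θ in a..b,
      (⟪gradient₂ L (θ, q θ, deriv q θ), h θ⟫ + ⟪gradient₃ L (θ, q θ, deriv q θ), deriv h θ⟫)
        * ρ θ := by
  have hvar := hasDerivAt_integral_comp_add_smul hL
    (continuous_id.prodMk (hq.continuous.prodMk (hq.continuous_deriv le_rfl)))
    (continuous_const.prodMk (hh.continuous.prodMk (hh.continuous_deriv le_rfl))) hρ
    (c := fun θ => (θ, q θ, deriv q θ)) (v := fun θ => (0, h θ, deriv h θ))
  simp only [Prod.smul_mk, Prod.mk_add_mk, smul_zero, add_zero] at hvar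
  rw [firstVariation, hvar.deriv]
  simp_rw [inner_gradient₂_add_inner_gradient₃ ((hL.differentiable one_ne_zero) _)]

theorem integral_smul_inner_gradient_eq_zero_of_firstVariation_eq_zero {ρ : ℝ → ℝ} {a b : ℝ}
    {q : ℝ → E} (hL : ContDiff ℝ 1 L) (hq : ContDiff ℝ 1 q) (hρ : IntervalIntegrable ρ volume a b)
    (hcrit : ∀ h : ℝ → E, ContDiff ℝ 2 h → h a = 0 → h b = 0 → firstVariation L ρ a b q h = 0)
    {g : ℝ → ℝ} (hg : ContDiff ℝ 2 g) (hgU : tsupport g ⊆ Ioo a b) (w : E) :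
    ∫ θ, g θ • (ρ θ * ⟪gradient₂ L (θ, q θ, deriv q θ), w⟫)
      + deriv g θ • (ρ θ * ⟪gradient₃ L (θ, q θ, deriv q θ), w⟫) = 0 := by
  have hh : ContDiff ℝ 2 fun θ => g θ • w := hg.smul contDiff_const
  have hg0 : ∀ x ∉ Ioo a b, g x = 0 := fun x hx =>
    image_eq_zero_of_notMem_tsupport fun h => hx (hgU h)
  have hvar := hcrit _ hh (by simp [hg0 a (by simp)]) (by simp [hg0 b (by simp)])
  rw [firstVariation_eq hL hq (hh.of_le (by norm_num)) hρ] at hvar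
  rw [← intervalIntegral.integral_eq_integral_of_support_subset (a := a) (b := b), ← hvar]
  · congr 1 with θ
    rw [deriv_smul_const ((hg.differentiable (by norm_num)) θ), inner_smul_right, inner_smul_right,
      smul_eq_mul, smul_eq_mul]
    ring
  · refine subset_trans ?_ (hgU.trans Ioo_subset_Ioc_self)
    exact (support_add _ _).trans (union_subset
      ((support_smul_subset_left _ _).trans (subset_tsupport g))
      ((support_smul_subset_left (deriv g) _).trans support_deriv_subset))

theorem smul_gradient₂_eq_of_firstVariation_eq_zero {ρ ρ' : ℝ → ℝ} {a b : ℝ} {q : ℝ → E}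
    (hL : ContDiff ℝ 2 L) (hq : ContDiff ℝ 2 q) (hρ : IntervalIntegrable ρ volume a b)
    (hρ' : ∀ s ∈ Ioo a b, HasDerivAt ρ (ρ' s) s) (hρ'c : ContinuousOn ρ' (Ioo a b))
    (hcrit : ∀ h : ℝ → E, ContDiff ℝ 2 h → h a = 0 → h b = 0 → firstVariation L ρ a b q h = 0) :
    ∀ s ∈ Ioo a b, ρ s • gradient₂ L (s, q s, deriv q s)
      = ρ' s • gradient₃ L (s, q s, deriv q s)
        + ρ s • deriv (fun s => gradient₃ L (s, q s, deriv q s)) s := by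
  set G₂ := fun s => gradient₂ L (s, q s, deriv q s)
  set G₃ := fun s => gradient₃ L (s, q s, deriv q s)
  have hc : ContDiff ℝ 1 fun s => (s, q s, deriv q s) :=
    contDiff_id.prodMk ((hq.of_le one_le_two).prodMk (hq.iterate_deriv' 1 1))
  have hL' : ContDiff ℝ (1 + 1) L := hL
  have hG₂ : Continuous G₂ := (hL'.gradient₂_comp hc).continuous
  have hG₃ : ContDiff ℝ 1 G₃ := hL'.gradient₃_comp hc
  have hρc : ContinuousOn ρ (Ioo a b) := fun s hs => (hρ' s hs).continuousAt.continuousWithinAt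
  intro s hs
  refine ext_inner_right ℝ fun w => ?_
  have hB : ∀ s ∈ Ioo a b, HasDerivAt (fun s => ρ s * ⟪G₃ s, w⟫)
      (ρ' s * ⟪G₃ s, w⟫ + ρ s * ⟪deriv G₃ s, w⟫) s := fun s hs =>
    ((hρ' s hs).mul (((hG₃.differentiable one_ne_zero) s).hasDerivAt.inner ℝ
      (hasDerivAt_const s w))).congr_deriv (by simp)
  have hA : ContinuousOn (fun s => ρ s * ⟪G₂ s, w⟫) (Ioo a b) :=
    hρc.mul (hG₂.inner continuous_const).continuousOn
  have hEL := isOpen_Ioo.eqOn_of_integral_smul_add_deriv_smul_eq_zero hA hB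
    ((hρ'c.mul (hG₃.continuous.inner continuous_const).continuousOn).add
      (hρc.mul ((hG₃.continuous_deriv le_rfl).inner continuous_const).continuousOn))
    (fun g hg _ hgU => integral_smul_inner_gradient_eq_zero_of_firstVariation_eq_zero
      (hL.of_le one_le_two) (hq.of_le one_le_two) hρ hcrit (hg.of_le (by norm_cast)) hgU w) hs
  rw [inner_add_left, real_inner_smul_left, real_inner_smul_left, real_inner_smul_left]
  exact hEL

theorem falva_euler_lagrange_general {n : ℕ}
    (L : ℝ × EuclideanSpace ℝ (Fin n) × EuclideanSpace ℝ (Fin n) → ℝ)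
    (hL : ContDiff ℝ 2 L)
    (α a t : ℝ) (hα0 : 0 < α)
    (q : ℝ → EuclideanSpace ℝ (Fin n)) (hq : ContDiff ℝ 2 q)
    (hcrit : ∀ h : ℝ → EuclideanSpace ℝ (Fin n), ContDiff ℝ 2 h → h a = 0 → h t = 0 →
      deriv (fun ε : ℝ => (1 / Real.Gamma α) * ∫ θ in a..t,
        L (θ, q θ + ε • h θ, deriv q θ + ε • deriv h θ) * (t - θ) ^ (α - 1)) 0 = 0) :
    ∀ θ ∈ Set.Ioo a t,
      gradient (fun x => L (θ, x, deriv q θ)) (q θ)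
        - deriv (fun s => gradient (fun v => L (s, q s, v)) (deriv q s)) θ
      = ((1 - α) / (t - θ)) • gradient (fun v => L (θ, q θ, v)) (deriv q θ) := by
  intro θ₀ hθ₀
  change gradient₂ L (θ₀, q θ₀, deriv q θ₀) - deriv (fun s => gradient₃ L (s, q s, deriv q s)) θ₀
    = ((1 - α) / (t - θ₀)) • gradient₃ L (θ₀, q θ₀, deriv q θ₀)
  set ρ : ℝ → ℝ := fun s => (t - s) ^ (α - 1)
  have hρ : IntervalIntegrable ρ volume a t := intervalIntegrable_rpow_sub (by linarith) a t t
  have hρ' : ∀ s ∈ Ioo a t, HasDerivAt ρ ((1 - α) / (t - s) * ρ s) s := fun s hs => by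
    simpa using hasDerivAt_rpow_sub hs.2 (α - 1)
  have hρ'c : ContinuousOn (fun s => (1 - α) / (t - s) * ρ s) (Ioo a t) :=
    (continuousOn_const.div (continuousOn_const.sub continuousOn_id) fun s hs =>
      (sub_pos.2 hs.2).ne').mul fun s hs => (hρ' s hs).continuousAt.continuousWithinAt
  have hρ₀ : ρ θ₀ ≠ 0 := (rpow_pos_of_pos (sub_pos.2 hθ₀.2) _).ne'
  have hcritρ : ∀ h, ContDiff ℝ 2 h → h a = 0 → h t = 0 → firstVariation L ρ a t q h = 0 :=
    fun h hh ha ht => by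
      have := hcrit h hh ha ht
      rw [deriv_const_mul_field'] at this
      exact (mul_eq_zero.1 this).resolve_left (one_div_ne_zero (Gamma_pos_of_pos hα0).ne')
  clear_value ρ
  have hEL := smul_gradient₂_eq_of_firstVariation_eq_zero hL hq hρ hρ' hρ'c hcritρ θ₀ hθ₀
  refine smul_right_injective _ hρ₀ ?_
  linear_combination (norm := module) hEL

/-- Fractional Euler–Lagrange equation for the first-order FALVA problem:
a critical point of `I[q] = (1/Γ(α)) ∫_a^t L(θ, q θ, q' θ) (t-θ)^(α-1) dθ`
satisfies `∂₂L - d/dθ ∂₃L = ((1-α)/(t-θ)) ∂₃L` on `(a, t)`. -/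
theorem falva_euler_lagrange {n : ℕ}
    (L : ℝ × EuclideanSpace ℝ (Fin n) × EuclideanSpace ℝ (Fin n) → ℝ)
    (hL : ContDiff ℝ 2 L)
    (α a t : ℝ) (hα0 : 0 < α) (hα1 : α ≤ 1) (hat : a < t)
    (q : ℝ → EuclideanSpace ℝ (Fin n)) (hq : ContDiff ℝ 2 q)
    (hcrit : ∀ h : ℝ → EuclideanSpace ℝ (Fin n), ContDiff ℝ 2 h → h a = 0 → h t = 0 →
      deriv (fun ε : ℝ => (1 / Real.Gamma α) * ∫ θ in a..t,
        L (θ, q θ + ε • h θ, deriv q θ + ε • deriv h θ) * (t - θ) ^ (α - 1)) 0 = 0) :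
    ∀ θ ∈ Set.Ioo a t,
      gradient (fun x => L (θ, x, deriv q θ)) (q θ)
        - deriv (fun s => gradient (fun v => L (s, q s, v)) (deriv q s)) θ
      = ((1 - α) / (t - θ)) • gradient (fun v => L (θ, q θ, v)) (deriv q θ) :=
  falva_euler_lagrange_general L hL α a t hα0 q hq hcrit
end

section
/- Let L : ℝ × ℝ^n × ℝ^n → ℝ be C¹, 0 < α ≤ 1, a < t fixed. Suppose the family of transformations θ̄(ε,θ) = θ + ε τ(θ, q(θ)) + o(ε), q̄(ε, θ̄) = q(θ) + ε ξ(θ, q(θ)) + o(ε) (differentiable in ε with stated derivatives at ε = 0) satisfies the invariance identity L(θ̄, q̄, dq̄/dθ̄) (t − θ̄)^{α−1} (dθ̄/dθ) = L(θ, q, q')(t−θ)^{α−1} + ε (t−θ)^{α−1} Λ'(θ) + o(ε) for all θ in (a,t) and all ε near 0. Then, differentiating at ε = 0: ∂₁L τ + ∂₂L·ξ + ∂₃L·(ξ' − q' τ') + L (τ' + ((1−α)/(t−θ)) τ) = Λ'(θ) for all θ ∈ (a,t). Conversely, this pointwise identity implies the invariance identity to first order in ε. -/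
open Real RealInnerProductSpace


variable {n : ℕ}

private lemma falva_key {n : ℕ} (L : ℝ × EuclideanSpace ℝ (Fin n) × EuclideanSpace ℝ (Fin n) → ℝ) (hL : ContDiff ℝ 1 L)
    (α t θ : ℝ) (hθt : θ < t)
    (x v w z : EuclideanSpace ℝ (Fin n)) (τθ τ' : ℝ) :
    deriv (fun ε : ℝ =>
        L (θ + ε * τθ, x + ε • w,
            (1 + ε * τ')⁻¹ • (v + ε • z))
          * (t - (θ + ε * τθ)) ^ (α - 1) * (1 + ε * τ')) 0
      = (t - θ) ^ (α - 1) *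
        (deriv (fun s => L (s, x, v)) θ * τθ
          + ⟪gradient (fun x' => L (θ, x', v)) x, w⟫
          + ⟪gradient (fun v' => L (θ, x, v')) v, z - τ' • v⟫
          + L (θ, x, v) * (τ' + ((1 - α) / (t - θ)) * τθ)) := by
  have ht0 : (0:ℝ) < t - θ := by linarith
  set p : ℝ × EuclideanSpace ℝ (Fin n) × EuclideanSpace ℝ (Fin n) := (θ, x, v) with hp
  have hLd : HasFDerivAt L (fderiv ℝ L p) p := (hL.differentiable one_ne_zero p).hasFDerivAt
  set D := fderiv ℝ L p with hD
  -- the curve ε ↦ (θ + ε τθ, x + ε w, (1+ετ')⁻¹ (v + ε z))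
  have h1 : HasDerivAt (fun ε : ℝ => θ + ε * τθ) τθ 0 := by
    simpa using ((hasDerivAt_id (0:ℝ)).mul_const τθ).const_add θ
  have h2 : HasDerivAt (fun ε : ℝ => x + ε • w) w 0 := by
    simpa using ((hasDerivAt_id (0:ℝ)).smul_const w).const_add x
  have hden : HasDerivAt (fun ε : ℝ => 1 + ε * τ') τ' 0 := by
    simpa using ((hasDerivAt_id (0:ℝ)).mul_const τ').const_add 1
  have hinv : HasDerivAt (fun ε : ℝ => (1 + ε * τ')⁻¹) (-τ') 0 := by
    have := hden.fun_inv (by norm_num)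
    simpa using this
  have hvec : HasDerivAt (fun ε : ℝ => v + ε • z) z 0 := by
    simpa using ((hasDerivAt_id (0:ℝ)).smul_const z).const_add v
  have h3 : HasDerivAt (fun ε : ℝ => (1 + ε * τ')⁻¹ • (v + ε • z)) (z - τ' • v) 0 := by
    have h := hinv.smul hvec
    simp only [zero_mul, add_zero, zero_smul, inv_one, one_smul, neg_smul] at h
    rw [sub_eq_add_neg]
    exact h
  have hA : HasDerivAt (fun ε : ℝ => ((θ + ε * τθ, x + ε • w,
      (1 + ε * τ')⁻¹ • (v + ε • z)) : ℝ × EuclideanSpace ℝ (Fin n) × EuclideanSpace ℝ (Fin n))) ((τθ, w, z - τ' • v) : ℝ × EuclideanSpace ℝ (Fin n) × EuclideanSpace ℝ (Fin n)) 0 :=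
    h1.prodMk (h2.prodMk h3)
  have hA0 : ((θ + 0 * τθ, x + (0:ℝ) • w, (1 + 0 * τ')⁻¹ • (v + (0:ℝ) • z)) : ℝ × EuclideanSpace ℝ (Fin n) × EuclideanSpace ℝ (Fin n)) = p := by
    simp [hp]
  have hLd' : HasFDerivAt L D ((θ + 0 * τθ, x + (0:ℝ) • w, (1 + 0 * τ')⁻¹ • (v + (0:ℝ) • z))) := by
    rw [hA0]; exact hLd
  have hLA : HasDerivAt (fun ε : ℝ => L (θ + ε * τθ, x + ε • w,
      (1 + ε * τ')⁻¹ • (v + ε • z))) (D (τθ, w, z - τ' • v)) 0 :=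
    hLd'.comp_hasDerivAt 0 hA
  -- the factor (t - (θ + ε τθ))^(α-1)
  have hb : HasDerivAt (fun ε : ℝ => t - (θ + ε * τθ)) (-τθ) 0 := by
    simpa using h1.const_sub t
  have hg : HasDerivAt (fun ε : ℝ => (t - (θ + ε * τθ)) ^ (α - 1))
      ((α - 1) * (t - θ) ^ (α - 1 - 1) * (-τθ)) 0 := by
    have h := hb.rpow_const (p := α - 1) (Or.inl (by norm_num; linarith))
    norm_num at h
    convert h using 1
    ring
  -- the full product
  have hF := (hLA.fun_mul hg).fun_mul hden
  rw [hF.deriv]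
  -- identify the partial derivatives
  have hterm1 : deriv (fun s => L (s, x, v)) θ = D ((1:ℝ), (0:EuclideanSpace ℝ (Fin n)), (0:EuclideanSpace ℝ (Fin n))) := by
    have hc : HasDerivAt (fun s : ℝ => ((s, x, v) : ℝ × EuclideanSpace ℝ (Fin n) × EuclideanSpace ℝ (Fin n))) ((1:ℝ), (0:EuclideanSpace ℝ (Fin n)), (0:EuclideanSpace ℝ (Fin n))) θ :=
      (hasDerivAt_id θ).prodMk ((hasDerivAt_const θ x).prodMk (hasDerivAt_const θ v))
    exact (hLd.comp_hasDerivAt θ hc).deriv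
  have hterm2 : ⟪gradient (fun x' => L (θ, x', v)) x, w⟫ = D ((0:ℝ), w, (0:EuclideanSpace ℝ (Fin n))) := by
    simp only [gradient, InnerProductSpace.toDual_symm_apply]
    have hJ : HasFDerivAt (fun x' : EuclideanSpace ℝ (Fin n) => ((θ, x', v) : ℝ × EuclideanSpace ℝ (Fin n) × EuclideanSpace ℝ (Fin n)))
        ((0 : EuclideanSpace ℝ (Fin n) →L[ℝ] ℝ).prod ((ContinuousLinearMap.id ℝ (EuclideanSpace ℝ (Fin n))).prod 0)) x :=
      (hasFDerivAt_const θ x).prodMk ((hasFDerivAt_id x).prodMk (hasFDerivAt_const v x))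
    have h' : HasFDerivAt (fun x' : EuclideanSpace ℝ (Fin n) => L (θ, x', v)) _ x := hLd.comp x hJ
    rw [h'.fderiv]; rfl
  have hterm3 : ⟪gradient (fun v' => L (θ, x, v')) v, z - τ' • v⟫ = D ((0:ℝ), (0:EuclideanSpace ℝ (Fin n)), z - τ' • v) := by
    simp only [gradient, InnerProductSpace.toDual_symm_apply]
    have hJ : HasFDerivAt (fun v' : EuclideanSpace ℝ (Fin n) => ((θ, x, v') : ℝ × EuclideanSpace ℝ (Fin n) × EuclideanSpace ℝ (Fin n)))
        ((0 : EuclideanSpace ℝ (Fin n) →L[ℝ] ℝ).prod ((0 : EuclideanSpace ℝ (Fin n) →L[ℝ] EuclideanSpace ℝ (Fin n)).prod (ContinuousLinearMap.id ℝ (EuclideanSpace ℝ (Fin n))))) v :=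
      (hasFDerivAt_const θ v).prodMk ((hasFDerivAt_const x v).prodMk (hasFDerivAt_id v))
    have h' : HasFDerivAt (fun v' : EuclideanSpace ℝ (Fin n) => L (θ, x, v')) _ v := hLd.comp v hJ
    rw [h'.fderiv]; rfl
  have hsplit : D ((τθ, w, z - τ' • v) : ℝ × EuclideanSpace ℝ (Fin n) × EuclideanSpace ℝ (Fin n))
      = τθ * D ((1:ℝ), (0:EuclideanSpace ℝ (Fin n)), (0:EuclideanSpace ℝ (Fin n))) + D ((0:ℝ), w, (0:EuclideanSpace ℝ (Fin n))) + D ((0:ℝ), (0:EuclideanSpace ℝ (Fin n)), z - τ' • v) := by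
    have : ((τθ, w, z - τ' • v) : ℝ × EuclideanSpace ℝ (Fin n) × EuclideanSpace ℝ (Fin n))
        = τθ • ((1:ℝ), (0:EuclideanSpace ℝ (Fin n)), (0:EuclideanSpace ℝ (Fin n))) + ((0:ℝ), w, (0:EuclideanSpace ℝ (Fin n))) + ((0:ℝ), (0:EuclideanSpace ℝ (Fin n)), z - τ' • v) := by
      simp [Prod.ext_iff]
    rw [this, map_add, map_add, map_smul]
    simp [smul_eq_mul]
  rw [hterm1, hterm2, hterm3, hsplit, hA0]
  -- algebra
  have hrpow : (t - θ) ^ (α - 1 - 1) = (t - θ) ^ (α - 1) / (t - θ) := by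
    rw [Real.rpow_sub ht0, Real.rpow_one]
  rw [hrpow]
  field_simp
  ring



/-- Necessary and sufficient condition for invariance of the FALVA functional (m = 1):
the invariance identity, differentiated at ε = 0, holds if and only if the pointwise
identity `∂₁L τ + ∂₂L·ξ + ∂₃L·(ξ' - q'τ') + L(τ' + ((1-α)/(t-θ))τ) = Λ'` holds on `(a,t)`. -/
theorem falva_invariance_necessary_sufficient {n : ℕ}
    (L : ℝ × EuclideanSpace ℝ (Fin n) × EuclideanSpace ℝ (Fin n) → ℝ)
    (hL : ContDiff ℝ 1 L)
    (α a t : ℝ) (hα0 : 0 < α) (hα1 : α ≤ 1) (hat : a < t)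
    (q : ℝ → EuclideanSpace ℝ (Fin n)) (hq : ContDiff ℝ (⊤ : ℕ∞) q)
    (τ : ℝ → ℝ) (hτ : ContDiff ℝ (⊤ : ℕ∞) τ)
    (ξ : ℝ → EuclideanSpace ℝ (Fin n)) (hξ : ContDiff ℝ (⊤ : ℕ∞) ξ)
    (Λ : ℝ → ℝ) (hΛ : ContDiff ℝ (⊤ : ℕ∞) Λ) :
    -- invariance identity to first order in ε
    (∀ θ ∈ Set.Ioo a t,
      deriv (fun ε : ℝ =>
        L (θ + ε * τ θ, q θ + ε • ξ θ,
            (1 + ε * deriv τ θ)⁻¹ • (deriv q θ + ε • deriv ξ θ))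
          * (t - (θ + ε * τ θ)) ^ (α - 1) * (1 + ε * deriv τ θ)) 0
        = (t - θ) ^ (α - 1) * deriv Λ θ)
    ↔
    -- pointwise invariance condition
    (∀ θ ∈ Set.Ioo a t,
      deriv (fun s => L (s, q θ, deriv q θ)) θ * τ θ
        + ⟪gradient (fun x => L (θ, x, deriv q θ)) (q θ), ξ θ⟫
        + ⟪gradient (fun v => L (θ, q θ, v)) (deriv q θ),
            deriv ξ θ - deriv τ θ • deriv q θ⟫
        + L (θ, q θ, deriv q θ) * (deriv τ θ + ((1 - α) / (t - θ)) * τ θ)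
      = deriv Λ θ) := by
  have hkey := fun (θ : ℝ) (hθ : θ ∈ Set.Ioo a t) =>
    falva_key L hL α t θ hθ.2 (q θ) (deriv q θ) (ξ θ) (deriv ξ θ) (τ θ) (deriv τ θ)
  constructor <;> intro h θ hθ <;> have h' := h θ hθ <;>
    have hne : (t - θ) ^ (α - 1) ≠ 0 :=
      ne_of_gt (Real.rpow_pos_of_pos (by linarith [hθ.2]) _)
  · rw [hkey θ hθ] at h'
    exact mul_left_cancel₀ hne h'
  · rw [hkey θ hθ, h']
end
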